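/- Let c(t) = t² + 1 + ε(γ₁t + γ₀ + b·j·t + b·i) with b > 0 (circular translation). Then for every v₁, v₂, v₃ with u₃ = −v₃ = −γ₀/2, the polynomials F₁ = t − k + ε(γ₁/2 + u₁i + (b − v₂)j − (γ₀/2)k) and F₂ = t + k + ε(γ₁/2 − u₁i + v₂j + (γ₀/2)k) with u₁ = −v₁ satisfy c = F₁·F₂. -/

import Mathlib

/-!
The indeterminate is central in `DH[t]`, so `(t + a)(t + b) = t² + (a + b)t + ab` and the
factorization reduces to two identities in the dual quaternions. Writing a dual quaternion as
`p + εq` with `p q : ℍ` (`Quaternion.dualNumberEquiv`), `ε² = 0` gives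
`(p + εq)(p' + εq') = pp' + ε(pq' + qp')`, so both identities become computations in `ℍ`.
-/

open TrivSqZeroExt Polynomial

noncomputable section

/-- A real quaternion viewed as the primal part of a dual quaternion. -/
def pQ (q : Quaternion ℝ) : Quaternion (DualNumber ℝ) :=
  ⟨inl q.re, inl q.imI, inl q.imJ, inl q.imK⟩

/-- A real quaternion multiplied by `ε`, i.e. the dual part of a dual quaternion. -/
def eQ (q : Quaternion ℝ) : Quaternion (DualNumber ℝ) :=
  ⟨inr q.re, inr q.imI, inr q.imJ, inr q.imK⟩

theorem Polynomial.X_add_C_mul_X_add_C {R : Type*} [Semiring R] (a b : R) :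
    (X + C a) * (X + C b) = X ^ 2 + C (a + b) * X + C (a * b) := by
  simp only [add_mul, mul_add, C_add, C_mul, X_mul_C, sq]
  abel

theorem pQ_eq_dualNumberEquiv_symm_inl (p : Quaternion ℝ) :
    pQ p = Quaternion.dualNumberEquiv.symm (inl p) :=
  rfl

theorem eQ_eq_dualNumberEquiv_symm_inr (q : Quaternion ℝ) :
    eQ q = Quaternion.dualNumberEquiv.symm (inr q) :=
  rfl

theorem pQ_zero : pQ 0 = 0 := by
  rw [pQ_eq_dualNumberEquiv_symm_inl, inl_zero, map_zero]

theorem pQ_add_eQ_add_pQ_add_eQ {p q p' q' s : Quaternion ℝ} (hp : p + p' = 0)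
    (hq : q + q' = s) : pQ p + eQ q + (pQ p' + eQ q') = eQ s := by
  have hsum : pQ p + eQ q + (pQ p' + eQ q') = pQ (p + p') + eQ (q + q') := by
    simp only [pQ_eq_dualNumberEquiv_symm_inl, eQ_eq_dualNumberEquiv_symm_inr, inl_add,
      inr_add, map_add]
    abel
  rw [hsum, hp, hq, pQ_zero]
  exact zero_add (eQ s)

theorem pQ_add_eQ_mul_pQ_add_eQ {p q p' q' r s : Quaternion ℝ} (hp : p * p' = r)
    (hq : p * q' + q * p' = s) : (pQ p + eQ q) * (pQ p' + eQ q') = pQ r + eQ s := by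
  subst hp hq
  simp only [pQ_eq_dualNumberEquiv_symm_inl, eQ_eq_dualNumberEquiv_symm_inr, ← map_add,
    ← map_mul]
  congr 1
  ext <;> simp

theorem circular_translation_factorization_general
    (b γ₀ γ₁ u₁ v₂ : ℝ) :
    (X ^ 2 + C (pQ 1 + eQ ⟨γ₀, b, 0, 0⟩) + C (eQ ⟨γ₁, 0, b, 0⟩) * X :
        Polynomial (Quaternion (DualNumber ℝ)))
    = (X + C (pQ ⟨0, 0, 0, -1⟩ + eQ ⟨γ₁ / 2, u₁, b - v₂, -(γ₀ / 2)⟩))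
      * (X + C (pQ ⟨0, 0, 0, 1⟩ + eQ ⟨γ₁ / 2, -u₁, v₂, γ₀ / 2⟩)) := by
  have hk_add_k : (⟨0, 0, 0, -1⟩ : Quaternion ℝ) + ⟨0, 0, 0, 1⟩ = 0 := by
    ext <;> simp
  have hk_mul_k : (⟨0, 0, 0, -1⟩ : Quaternion ℝ) * ⟨0, 0, 0, 1⟩ = 1 := by
    ext <;> simp
  have hdual_add : (⟨γ₁ / 2, u₁, b - v₂, -(γ₀ / 2)⟩ : Quaternion ℝ) + ⟨γ₁ / 2, -u₁, v₂, γ₀ / 2⟩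
      = ⟨γ₁, 0, b, 0⟩ := by
    ext <;> simp
  have hdual_mul : (⟨0, 0, 0, -1⟩ : Quaternion ℝ) * ⟨γ₁ / 2, -u₁, v₂, γ₀ / 2⟩
      + ⟨γ₁ / 2, u₁, b - v₂, -(γ₀ / 2)⟩ * ⟨0, 0, 0, 1⟩ = ⟨γ₀, b, 0, 0⟩ := by
    ext <;> simp
  rw [X_add_C_mul_X_add_C, pQ_add_eQ_add_pQ_add_eQ hk_add_k hdual_add,
    pQ_add_eQ_mul_pQ_add_eQ hk_mul_k hdual_mul]
  exact add_right_comm _ _ _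

/-- Factorization of the circular translation polynomial
`c = t² + 1 + ε(γ₁t + γ₀ + b·j·t + b·i)`, `b > 0`: for every `u₁`, `v₂`, the
linear polynomials `F₁ = t − k + ε(γ₁/2 + u₁i + (b−v₂)j − (γ₀/2)k)` and
`F₂ = t + k + ε(γ₁/2 − u₁i + v₂j + (γ₀/2)k)` satisfy `c = F₁·F₂`. -/
theorem circular_translation_factorization
    (b γ₀ γ₁ u₁ v₂ : ℝ) (hb : 0 < b) :
    (X ^ 2 + C (pQ 1 + eQ ⟨γ₀, b, 0, 0⟩) + C (eQ ⟨γ₁, 0, b, 0⟩) * X :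
        Polynomial (Quaternion (DualNumber ℝ)))
    = (X + C (pQ ⟨0, 0, 0, -1⟩ + eQ ⟨γ₁ / 2, u₁, b - v₂, -(γ₀ / 2)⟩))
      * (X + C (pQ ⟨0, 0, 0, 1⟩ + eQ ⟨γ₁ / 2, -u₁, v₂, γ₀ / 2⟩)) :=
  circular_translation_factorization_general b γ₀ γ₁ u₁ v₂

end
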